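/- Let N be a random variable with the Poisson distribution of mean 1, set U = N − 1, V = (N − 1)² − N, and for α ∈ ℝ let S_α = (U + αV)/√(1 + 2α²). Then E[S_α⁴] = 3 if and only if 200α⁴ + 224α³ + 96α² + 24α + 1 = 0. -/

import Mathlib

/-!
Under `Po(1)` every factorial moment `E[N(N-1)⋯(N-j+1)]` equals `1`, so the expectation of a
polynomial in `N` is the sum of its coefficients in the falling-factorial basis. Expanding
`(U + αV)⁴` in that basis gives `E[(U + αV)⁴] = 4 + 24α + 108α² + 224α³ + 212α⁴`, and
`E[S_α⁴] = 3` becomes the stated quartic after multiplying by `(1 + 2α²)²`.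
-/

open MeasureTheory Real Finset
open scoped NNReal Nat

namespace ProbabilityTheory

lemma map_eq_poissonMeasure {Ω : Type*} [MeasurableSpace Ω] {μ : Measure Ω} {N : Ω → ℕ}
    (hN : Measurable N) (r : ℝ≥0)
    (hlaw : ∀ n, μ (N ⁻¹' {n}) = ENNReal.ofReal (exp (-r) * r ^ n / n !)) :
    μ.map N = poissonMeasure r :=
  Measure.ext_of_singleton fun n ↦ by
    rw [Measure.map_apply hN (.singleton n), hlaw, poissonMeasure_singleton]

lemma descFactorial_mul_poisson_weight_add (r : ℝ≥0) (m j : ℕ) :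
    ((m + j).descFactorial j : ℝ) * (exp (-r) * r ^ (m + j) / (m + j)!) =
      r ^ j * (exp (-r) * r ^ m / m !) := by
  have hfact : ((m + j).descFactorial j : ℝ) * m ! = (m + j)! := by
    rw [mul_comm]
    exact_mod_cast Nat.add_sub_cancel m j ▸ Nat.factorial_mul_descFactorial (Nat.le_add_left j m)
  rw [← hfact, pow_add]
  field_simp

lemma hasSum_descFactorial_mul_poisson_weight (r : ℝ≥0) (j : ℕ) :
    HasSum (fun n ↦ (n.descFactorial j : ℝ) * (exp (-r) * r ^ n / n !)) (r ^ j) := by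
  have hlow : ∑ n ∈ range j, (n.descFactorial j : ℝ) * (exp (-r) * r ^ n / n !) = 0 :=
    sum_eq_zero fun n hn ↦ by simp [Nat.descFactorial_eq_zero_iff_lt.2 (mem_range.1 hn)]
  rw [← hasSum_nat_add_iff' j, hlow, sub_zero]
  simp_rw [descFactorial_mul_poisson_weight_add]
  simpa using (hasSum_one_poissonMeasure r).mul_left ((r : ℝ) ^ j)

lemma integrable_descFactorial_poissonMeasure (r : ℝ≥0) (j : ℕ) :
    Integrable (fun n : ℕ ↦ (n.descFactorial j : ℝ)) (poissonMeasure r) := by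
  rw [integrable_poissonMeasure_iff]
  simpa [mul_comm] using (hasSum_descFactorial_mul_poisson_weight r j).summable

lemma integral_descFactorial_poissonMeasure (r : ℝ≥0) (j : ℕ) :
    ∫ n, (n.descFactorial j : ℝ) ∂poissonMeasure r = r ^ j := by
  rw [integral_poissonMeasure]
  simpa [mul_comm] using (hasSum_descFactorial_mul_poisson_weight r j).tsum_eq

lemma integral_sum_descFactorial_poissonMeasure {ι : Type*} (r : ℝ≥0) (s : Finset ι)
    (c : ι → ℝ) (d : ι → ℕ) :
    ∫ n, ∑ i ∈ s, c i * (n.descFactorial (d i) : ℝ) ∂poissonMeasure r = ∑ i ∈ s, c i * r ^ d i := by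
  rw [integral_finsetSum s fun i _ ↦ (integrable_descFactorial_poissonMeasure r (d i)).const_mul _]
  simp_rw [integral_const_mul, integral_descFactorial_poissonMeasure]

end ProbabilityTheory

open ProbabilityTheory

/- The coefficients of `(n - 1 + α ((n - 1)² - n))⁴` in the falling-factorial basis are its
Newton forward differences at `0` divided by `j!`. -/
lemma pow_four_eq_sum_descFactorial (α : ℝ) (n : ℕ) :
    ((n : ℝ) - 1 + α * (((n : ℝ) - 1) ^ 2 - n)) ^ 4 =
      ∑ j : Fin 9, ![1 - 4*α + 6*α^2 - 4*α^3 + α^4, -1 + 4*α - 6*α^2 + 4*α^3,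
        1 - 4*α + 6*α^2 - 4*α^3, 2 + 8*α + 4*α^3, 1 + 16*α + 54*α^2 + 60*α^3 + 26*α^4,
        4*α + 42*α^2 + 116*α^3 + 96*α^4, 6*α^2 + 44*α^3 + 72*α^4, 4*α^3 + 16*α^4, α^4] j *
        (n.descFactorial j : ℝ) := by
  simp only [Fin.sum_univ_succ, Fin.val_succ, Fin.val_zero, Fin.sum_univ_zero,
    ← descPochhammer_eval_eq_descFactorial ℝ, descPochhammer_succ_eval, descPochhammer_zero,
    Polynomial.eval_one]
  simp only [Nat.reduceAdd, Fin.isValue, Matrix.cons_val_zero, Fin.succ_zero_eq_one,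
    Matrix.cons_val_one, Fin.succ_one_eq_two, Matrix.cons_val, Fin.reduceSucc, Nat.cast_ofNat,
    Nat.cast_one, CharP.cast_eq_zero]
  ring

theorem poisson_normalized_fourth_moment_iff_general
    {Ω : Type*} [MeasurableSpace Ω] (μ : Measure Ω)
    (N : Ω → ℕ) (hN : Measurable N)
    (hlaw : ∀ k : ℕ, μ {ω | N ω = k} = ENNReal.ofReal (Real.exp (-1) / k.factorial))
    (U V : Ω → ℝ) (hU : U = fun ω => (N ω : ℝ) - 1)
    (hV : V = fun ω => ((N ω : ℝ) - 1) ^ 2 - N ω)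
    (α : ℝ) (S : Ω → ℝ)
    (hS : S = fun ω => (U ω + α * V ω) / Real.sqrt (1 + 2 * α ^ 2)) :
    (∫ ω, S ω ^ 4 ∂μ) = 3
      ↔ 200 * α ^ 4 + 224 * α ^ 3 + 96 * α ^ 2 + 24 * α + 1 = 0 := by
  subst hU hV hS
  have hmap : μ.map N = poissonMeasure 1 :=
    map_eq_poissonMeasure hN 1 fun n ↦ (hlaw n).trans (by simp)
  have hmoment : ∫ ω, ((N ω : ℝ) - 1 + α * (((N ω : ℝ) - 1) ^ 2 - N ω)) ^ 4 ∂μ =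
      4 + 24 * α + 108 * α ^ 2 + 224 * α ^ 3 + 212 * α ^ 4 := by
    rw [← integral_map (f := fun n : ℕ ↦ ((n : ℝ) - 1 + α * (((n : ℝ) - 1) ^ 2 - n)) ^ 4)
      hN.aemeasurable .of_discrete, hmap]
    simp_rw [pow_four_eq_sum_descFactorial α, integral_sum_descFactorial_poissonMeasure]
    simp only [NNReal.coe_one, one_pow, mul_one, Fin.sum_univ_succ, Fin.sum_univ_zero,
      Matrix.cons_val_zero, Matrix.cons_val_succ]
    ring
  have hsqrt : Real.sqrt (1 + 2 * α ^ 2) ^ 4 = (1 + 2 * α ^ 2) ^ 2 := by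
    rw [show 4 = 2 * 2 from rfl, pow_mul, Real.sq_sqrt (by positivity)]
  simp_rw [div_pow, hsqrt]
  rw [integral_div, hmoment, div_eq_iff (by positivity)]
  constructor <;> intro h <;> linear_combination h

/-- If `N ∼ Poisson(1)`, `U = N − 1`, `V = (N − 1)² − N` and
`S_α = (U + αV)/√(1 + 2α²)`, then `E[S_α⁴] = 3` if and only if
`200α⁴ + 224α³ + 96α² + 24α + 1 = 0`. -/
theorem poisson_normalized_fourth_moment_iff
    {Ω : Type*} [MeasurableSpace Ω] (μ : Measure Ω) [IsProbabilityMeasure μ]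
    (N : Ω → ℕ) (hN : Measurable N)
    (hlaw : ∀ k : ℕ, μ {ω | N ω = k} = ENNReal.ofReal (Real.exp (-1) / k.factorial))
    (U V : Ω → ℝ) (hU : U = fun ω => (N ω : ℝ) - 1)
    (hV : V = fun ω => ((N ω : ℝ) - 1) ^ 2 - N ω)
    (α : ℝ) (S : Ω → ℝ)
    (hS : S = fun ω => (U ω + α * V ω) / Real.sqrt (1 + 2 * α ^ 2)) :
    (∫ ω, S ω ^ 4 ∂μ) = 3
      ↔ 200 * α ^ 4 + 224 * α ^ 3 + 96 * α ^ 2 + 24 * α + 1 = 0 :=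
  poisson_normalized_fourth_moment_iff_general μ N hN hlaw U V hU hV α S hS
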